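/- Let d ≥ 1 and Λ′ ⊆ ℝ^d with Λ′ = −Λ′. Let u and h be finitely supported ℂ^d-valued vector fields on Λ′, both with all components satisfying the reality condition and both divergence-free (Σ_j k_j u_j(k) = 0 and Σ_j k_j h_j(k) = 0 for all k ∈ Λ′). Then the Kelvin cross-correlation identity holds: (u ∗ ∇u, h) + (u, u ∗ ∇h) − (u, h ∗ ∇u) = 0, where (u ∗ ∇v)_i = Σ_j u_j ∗ ∂_j v_i and (u, v) = Σ_k Σ_i u_i(k) · conj(v_i(k)). Consequently, if u solves the incompressible Euler equations on the lattice and h is a frozen-into-fluid divergence-free field satisfying ∂_t h + u ∗ ∇h − h ∗ ∇u = 0, the cross-correlation Γ = (u, h) is conserved in time. -/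

import Mathlib

/-! Against a real field `c`, the advection pairing `(a ∗ ∇b, c)` is the triad sum
`Σ_{p+q+r=0} a_j(p) · i q_j b_i(q) · c_i(r)`. As `p + q + r = 0`, the Leibniz rule for triads moves
the derivative off `b` onto `a` and `c`, and the term carrying `Σ_j ∂_j a_j` vanishes when `a` is
divergence free: `(a ∗ ∇b, c) + (a ∗ ∇c, b) = 0`. For real fields these pairings are real, so
`(u, u ∗ ∇h) = (u ∗ ∇h, u)` and `(u, h ∗ ∇u) = (h ∗ ∇u, u)`. Skew-symmetry with `a = u` cancels the
first two terms of the identity, and with `a = h`, `b = c = u` it kills the third. -/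

open scoped Classical

/-- The convolution product on a lattice `Λ ⊆ ℝ^d`:
`(f ∗ g)(k) = Σ_{p,q ∈ Λ, p+q=k} f(p) g(q)`. -/
noncomputable def latticeConv {d : ℕ} (Λ : Set (Fin d → ℝ))
    (f g : (Fin d → ℝ) → ℂ) (k : Fin d → ℝ) : ℂ :=
  ∑ᶠ p ∈ Λ, ∑ᶠ q ∈ Λ, if p + q = k then f p * g q else 0

/-- The reality condition `f(−k) = conj(f(k))`. -/
def RealityCond {d : ℕ} (f : (Fin d → ℝ) → ℂ) : Prop := ∀ k, f (-k) = star (f k)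

/-- The `j`-th lattice derivative `∂_j f(k) = i k_j f(k)`. -/
noncomputable def latticeDeriv {d : ℕ} (j : Fin d) (f : (Fin d → ℝ) → ℂ) :
    (Fin d → ℝ) → ℂ := fun k => Complex.I * (k j : ℂ) * f k

/-- The advective term `(u ∗ ∇v)_i = Σ_j u_j ∗ ∂_j v_i` on the lattice. -/
noncomputable def advect {d : ℕ} (Λ : Set (Fin d → ℝ))
    (u v : Fin d → (Fin d → ℝ) → ℂ) (i : Fin d) : (Fin d → ℝ) → ℂ :=
  fun k => ∑ j, latticeConv Λ (u j) (latticeDeriv j (v i)) k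

/-- The inner product of vector fields `(u, v) = Σ_k Σ_i u_i(k) conj(v_i(k))`. -/
noncomputable def vecInner {d : ℕ} (Λ : Set (Fin d → ℝ))
    (u v : Fin d → (Fin d → ℝ) → ℂ) : ℂ :=
  ∑ᶠ k ∈ Λ, ∑ i, u i k * star (v i k)

open Finset Function

theorem sum_comp_neg_of_neg_mem {α M : Type*} [AddCommGroup α] [AddCommMonoid M] {S : Finset α}
    (hS : ∀ p ∈ S, -p ∈ S) (F : α → M) : ∑ p ∈ S, F (-p) = ∑ p ∈ S, F p :=
  sum_nbij' (- ·) (- ·) hS hS (fun p _ => neg_neg p) (fun p _ => neg_neg p) fun _ _ => rfl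

section Triad

variable {α R : Type*} [AddCommGroup α] [DecidableEq α] [CommSemiring R]

/-- The Fourier-side form of `∫ f g w`: the sum of `f p * g q * w r` over triads `p + q + r = 0`. -/
def triadSum (S : Finset α) (f g w : α → R) : R :=
  ∑ p ∈ S, ∑ q ∈ S, ∑ r ∈ S, if p + q + r = 0 then f p * g q * w r else 0

theorem triadSum_right_comm (S : Finset α) (f g w : α → R) :
    triadSum S f g w = triadSum S f w g := by
  unfold triadSum
  refine sum_congr rfl fun p _ => ?_
  rw [sum_comm]
  simp only [add_right_comm p, mul_right_comm (f p)]

theorem triadSum_sum_left {ι : Type*} (s : Finset ι) (S : Finset α) (F : ι → α → R)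
    (g w : α → R) :
    triadSum S (fun p => ∑ j ∈ s, F j p) g w = ∑ j ∈ s, triadSum S (F j) g w := by
  simp only [triadSum, sum_mul, ite_sum_zero]
  symm
  rw [sum_comm]; refine sum_congr rfl fun p _ => ?_
  rw [sum_comm]; refine sum_congr rfl fun q _ => ?_
  rw [sum_comm]

theorem triadSum_comp_neg {S : Finset α} (hS : ∀ p ∈ S, -p ∈ S) (f g w : α → R) :
    triadSum S (fun p => f (-p)) (fun q => g (-q)) (fun r => w (-r)) = triadSum S f g w := by
  unfold triadSum
  rw [← sum_comp_neg_of_neg_mem hS]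
  refine sum_congr rfl fun p _ => ?_
  rw [← sum_comp_neg_of_neg_mem hS]
  refine sum_congr rfl fun q _ => ?_
  rw [← sum_comp_neg_of_neg_mem hS]
  refine sum_congr rfl fun r _ => ?_
  simp only [neg_neg, ← neg_add, neg_eq_zero]

theorem star_triadSum [StarRing R] (S : Finset α) (f g w : α → R) :
    star (triadSum S f g w) =
      triadSum S (fun p => star (f p)) (fun q => star (g q)) (fun r => star (w r)) := by
  simp only [triadSum, star_sum, apply_ite star, star_mul', star_zero]

theorem triadSum_eq_zero_of_left {S : Finset α} {f : α → R} (hf : ∀ p ∈ S, f p = 0)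
    (g w : α → R) : triadSum S f g w = 0 :=
  sum_eq_zero fun p hp => by simp [hf p hp]

end Triad

section Lattice

variable {d : ℕ} {Λ : Set (Fin d → ℝ)} {S : Finset (Fin d → ℝ)}

theorem star_vecInner (a b : Fin d → (Fin d → ℝ) → ℂ) :
    star (vecInner Λ a b) = vecInner Λ b a := by
  simp only [vecInner, ← starAddEquiv_apply, AddEquiv.map_finsum]
  simp only [starAddEquiv_apply, star_sum, star_mul', star_star, mul_comm]

theorem RealityCond.latticeDeriv {f : (Fin d → ℝ) → ℂ} (hf : RealityCond f) (j : Fin d) :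
    RealityCond (latticeDeriv j f) := by
  intro k
  simp [_root_.latticeDeriv, hf k]

theorem support_latticeDeriv_subset (j : Fin d) (f : (Fin d → ℝ) → ℂ) :
    support (latticeDeriv j f) ⊆ support f :=
  support_mul_subset_right _ _

theorem star_triadSum_of_reality {f g w : (Fin d → ℝ) → ℂ} (hS : ∀ p ∈ S, -p ∈ S)
    (hf : RealityCond f) (hg : RealityCond g) (hw : RealityCond w) :
    star (triadSum S f g w) = triadSum S f g w := by
  rw [star_triadSum, ← triadSum_comp_neg hS f g w]
  simp only [hf _, hg _, hw _]

theorem latticeConv_eq_sum (hSΛ : ↑S ⊆ Λ) {f g : (Fin d → ℝ) → ℂ} (hf : support f ⊆ S)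
    (hg : support g ⊆ S) (k : Fin d → ℝ) :
    latticeConv Λ f g k = ∑ p ∈ S, ∑ q ∈ S, if p + q = k then f p * g q else 0 := by
  rw [latticeConv, finsum_mem_eq_sum_of_subset _ ?_ hSΛ]
  · refine sum_congr rfl fun p _ => finsum_mem_eq_sum_of_subset _ ?_ hSΛ
    exact fun q hq => hg fun hgq => hq.2 (by simp [hgq])
  · exact fun p hp => hf fun hfp => hp.2 (by simp [hfp])

theorem vecInner_eq_sum (hSΛ : ↑S ⊆ Λ) (a : Fin d → (Fin d → ℝ) → ℂ)
    {b : Fin d → (Fin d → ℝ) → ℂ} (hb : ∀ i, support (b i) ⊆ S) :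
    vecInner Λ a b = ∑ k ∈ S, ∑ i, a i k * star (b i k) :=
  finsum_mem_eq_sum_of_subset _ (fun k hk => by_contra fun hkS => hk.2
    (sum_eq_zero fun i _ => by simp [notMem_support.1 fun h => hkS (hb i h)])) hSΛ

theorem sum_latticeConv_mul_star (hSΛ : ↑S ⊆ Λ) (hS : ∀ p ∈ S, -p ∈ S)
    {f g w : (Fin d → ℝ) → ℂ} (hf : support f ⊆ S) (hg : support g ⊆ S) (hw : RealityCond w) :
    ∑ k ∈ S, latticeConv Λ f g k * star (w k) = triadSum S f g w := by
  simp only [latticeConv_eq_sum hSΛ hf hg, sum_mul, ite_mul, zero_mul]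
  -- substitute `k = -r`; reality turns `star (w (-r))` into `w r`
  rw [← sum_comp_neg_of_neg_mem hS, sum_comm]
  refine sum_congr rfl fun p _ => ?_
  rw [sum_comm]
  refine sum_congr rfl fun q _ => sum_congr rfl fun r _ => ?_
  simp only [hw r, star_star, eq_neg_iff_add_eq_zero]

theorem triadSum_latticeDeriv_leibniz (S : Finset (Fin d → ℝ)) (j : Fin d)
    (f g w : (Fin d → ℝ) → ℂ) :
    triadSum S (latticeDeriv j f) g w + triadSum S f (latticeDeriv j g) w
      + triadSum S f g (latticeDeriv j w) = 0 := by
  simp only [triadSum, ← sum_add_distrib]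
  refine sum_eq_zero fun p _ => sum_eq_zero fun q _ => sum_eq_zero fun r _ => ?_
  split_ifs with hpqr
  · have hj : (p j : ℂ) + q j + r j = 0 := by exact_mod_cast congrFun hpqr j
    simp only [latticeDeriv]
    linear_combination Complex.I * f p * g q * w r * hj
  · simp

theorem sum_triadSum_latticeDeriv_eq_zero {a : Fin d → (Fin d → ℝ) → ℂ}
    (hdiv : ∀ k ∈ S, ∑ j, (k j : ℂ) * a j k = 0) (g w : (Fin d → ℝ) → ℂ) :
    ∑ j, triadSum S (latticeDeriv j (a j)) g w = 0 := by
  rw [← triadSum_sum_left]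
  refine triadSum_eq_zero_of_left (fun p hp => ?_) g w
  simp only [latticeDeriv, mul_assoc, ← mul_sum, hdiv p hp, mul_zero]

theorem exists_finset_support_subset {ι : Type*} [Finite ι]
    (f : ι → (Fin d → ℝ) → ℂ) (hfin : ∀ i, (support (f i)).Finite)
    (hsupp : ∀ i, support (f i) ⊆ Λ) (hreal : ∀ i, RealityCond (f i)) :
    ∃ S : Finset (Fin d → ℝ), ↑S ⊆ Λ ∧ (∀ p ∈ S, -p ∈ S) ∧ ∀ i, support (f i) ⊆ S := by
  have hU := Set.finite_iUnion hfin
  refine ⟨hU.toFinset, ?_, fun p hp => ?_, fun i => ?_⟩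
  · simpa using Set.iUnion_subset hsupp
  · simp only [Set.Finite.mem_toFinset, Set.mem_iUnion, mem_support] at hp ⊢
    obtain ⟨i, hi⟩ := hp
    exact ⟨i, by simpa [hreal i p] using hi⟩
  · simpa using Set.subset_iUnion (fun i => support (f i)) i

variable {a b c : Fin d → (Fin d → ℝ) → ℂ}

theorem vecInner_advect_eq_sum_triadSum (hSΛ : ↑S ⊆ Λ) (hS : ∀ p ∈ S, -p ∈ S)
    (ha : ∀ i, support (a i) ⊆ S) (hb : ∀ i, support (b i) ⊆ S) (hc : ∀ i, support (c i) ⊆ S)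
    (hcr : ∀ i, RealityCond (c i)) :
    vecInner Λ (advect Λ a b) c = ∑ i, ∑ j, triadSum S (a j) (latticeDeriv j (b i)) (c i) := by
  simp only [vecInner_eq_sum hSΛ _ hc, advect, sum_mul]
  rw [sum_comm]
  refine sum_congr rfl fun i _ => ?_
  rw [sum_comm]
  exact sum_congr rfl fun j _ => sum_latticeConv_mul_star hSΛ hS (ha j)
    ((support_latticeDeriv_subset j _).trans (hb i)) (hcr i)

theorem vecInner_advect_add_vecInner_advect_eq_zero (hSΛ : ↑S ⊆ Λ) (hS : ∀ p ∈ S, -p ∈ S)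
    (ha : ∀ i, support (a i) ⊆ S) (hb : ∀ i, support (b i) ⊆ S) (hc : ∀ i, support (c i) ⊆ S)
    (hadiv : ∀ k ∈ Λ, ∑ j, (k j : ℂ) * a j k = 0)
    (hbr : ∀ i, RealityCond (b i)) (hcr : ∀ i, RealityCond (c i)) :
    vecInner Λ (advect Λ a b) c + vecInner Λ (advect Λ a c) b = 0 := by
  rw [vecInner_advect_eq_sum_triadSum hSΛ hS ha hb hc hcr,
    vecInner_advect_eq_sum_triadSum hSΛ hS ha hc hb hbr, ← sum_add_distrib]
  refine sum_eq_zero fun i _ => ?_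
  calc ∑ j, triadSum S (a j) (latticeDeriv j (b i)) (c i)
        + ∑ j, triadSum S (a j) (latticeDeriv j (c i)) (b i)
      = -∑ j, triadSum S (latticeDeriv j (a j)) (b i) (c i) := by
        rw [← sum_add_distrib, ← sum_neg_distrib]
        refine sum_congr rfl fun j _ => ?_
        rw [triadSum_right_comm S (a j) (latticeDeriv j (c i))]
        linear_combination triadSum_latticeDeriv_leibniz S j (a j) (b i) (c i)
    _ = 0 := by
        rw [sum_triadSum_latticeDeriv_eq_zero (fun k hk => hadiv k (hSΛ hk)), neg_zero]

theorem vecInner_advect_comm (hSΛ : ↑S ⊆ Λ) (hS : ∀ p ∈ S, -p ∈ S)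
    (ha : ∀ i, support (a i) ⊆ S) (hb : ∀ i, support (b i) ⊆ S) (hc : ∀ i, support (c i) ⊆ S)
    (har : ∀ i, RealityCond (a i)) (hbr : ∀ i, RealityCond (b i))
    (hcr : ∀ i, RealityCond (c i)) :
    vecInner Λ c (advect Λ a b) = vecInner Λ (advect Λ a b) c := by
  rw [← star_vecInner, vecInner_advect_eq_sum_triadSum hSΛ hS ha hb hc hcr]
  simp only [star_sum]
  exact sum_congr rfl fun i _ => sum_congr rfl fun j _ =>
    star_triadSum_of_reality hS (har j) ((hbr i).latticeDeriv j) (hcr i)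

end Lattice

theorem kelvin_cross_correlation_general (d : ℕ)
    (Λ : Set (Fin d → ℝ))
    (u h : Fin d → (Fin d → ℝ) → ℂ)
    (hufin : ∀ i, (Function.support (u i)).Finite)
    (husupp : ∀ i, Function.support (u i) ⊆ Λ)
    (hureal : ∀ i, RealityCond (u i))
    (hudiv : ∀ k ∈ Λ, ∑ j, (k j : ℂ) * u j k = 0)
    (hhfin : ∀ i, (Function.support (h i)).Finite)
    (hhsupp : ∀ i, Function.support (h i) ⊆ Λ)
    (hhreal : ∀ i, RealityCond (h i))
    (hhdiv : ∀ k ∈ Λ, ∑ j, (k j : ℂ) * h j k = 0) :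
    vecInner Λ (advect Λ u u) h + vecInner Λ u (advect Λ u h)
      - vecInner Λ u (advect Λ h u) = 0 := by
  obtain ⟨S, hSΛ, hS, hSupp⟩ := exists_finset_support_subset (Sum.elim u h)
    (Sum.forall.2 ⟨hufin, hhfin⟩) (Sum.forall.2 ⟨husupp, hhsupp⟩)
    (Sum.forall.2 ⟨hureal, hhreal⟩)
  have hSu : ∀ i, support (u i) ⊆ S := fun i => hSupp (Sum.inl i)
  have hSh : ∀ i, support (h i) ⊆ S := fun i => hSupp (Sum.inr i)
  have hu_skew := vecInner_advect_add_vecInner_advect_eq_zero hSΛ hS hSu hSu hSh hudiv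
    hureal hhreal
  have hh_skew := vecInner_advect_add_vecInner_advect_eq_zero hSΛ hS hSh hSu hSu hhdiv
    hureal hureal
  rw [vecInner_advect_comm hSΛ hS hSu hSh hSu hureal hhreal hureal,
    vecInner_advect_comm hSΛ hS hSh hSu hSu hhreal hureal hureal]
  linear_combination hu_skew - hh_skew / 2

/-- Kelvin cross-correlation identity on a generalized lattice `Λ′ = −Λ′ ⊆ ℝ^d`:
for finitely supported, divergence-free vector fields `u` and `h` satisfying
the reality condition, `(u ∗ ∇u, h) + (u, u ∗ ∇h) − (u, h ∗ ∇u) = 0`.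
Consequently the cross-correlation `Γ = (u,h)` of an Euler solution `u` with a
frozen-into-fluid field `h` is conserved in time. -/
theorem kelvin_cross_correlation (d : ℕ) (hd : 1 ≤ d)
    (Λ : Set (Fin d → ℝ)) (hΛ : Λ = -Λ)
    (u h : Fin d → (Fin d → ℝ) → ℂ)
    (hufin : ∀ i, (Function.support (u i)).Finite)
    (husupp : ∀ i, Function.support (u i) ⊆ Λ)
    (hureal : ∀ i, RealityCond (u i))
    (hudiv : ∀ k ∈ Λ, ∑ j, (k j : ℂ) * u j k = 0)
    (hhfin : ∀ i, (Function.support (h i)).Finite)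
    (hhsupp : ∀ i, Function.support (h i) ⊆ Λ)
    (hhreal : ∀ i, RealityCond (h i))
    (hhdiv : ∀ k ∈ Λ, ∑ j, (k j : ℂ) * h j k = 0) :
    vecInner Λ (advect Λ u u) h + vecInner Λ u (advect Λ u h)
      - vecInner Λ u (advect Λ h u) = 0 :=
  kelvin_cross_correlation_general d Λ u h hufin husupp hureal hudiv hhfin hhsupp hhreal hhdiv
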